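/- Every liability game is linearly representable: with players N = {0,1,...,k}, liabilities l_1,...,l_k ∈ ℕ, assets A ∈ ℕ with A < Σ l_i, setting L = Σ l_i + 1, a_0 = L, a_i = l_i for i ≥ 1, and f(x) = min(A, x - L) if x ≥ L and f(x) = max(0, A - (L - 1 - x)) if x < L, one has v(S) = f(Σ_{i∈S} a_i), where v(S) = min(A, Σ_{j∈S\{0}} l_j) if 0 ∈ S and v(S) = max(0, A - Σ_{j∉S∪{0}} l_j) if 0 ∉ S. -/

import Mathlib

open Finset

/-
Give player 0 the weight L = Σ lᵢ + 1 and player i ≥ 1 the weight lᵢ. The liabilities of a coalition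
sum to at most L - 1, so the total weight of S is at least L exactly when 0 ∈ S, and subtracting L
in that case recovers Σ_{j ∈ S \ {0}} lⱼ. The liabilities outside S ∪ {0} are the rest of Σ lᵢ = L - 1,
so both branches of v are functions of the total weight.
-/

def liabilityDecoder (A L x : ℕ) : ℤ :=
  if L ≤ x then min (A : ℤ) ((x : ℤ) - L) else max 0 ((A : ℤ) - ((L : ℤ) - 1 - x))

lemma liabilityDecoder_add_left (A L s : ℕ) :
    liabilityDecoder A L (L + s) = min (A : ℤ) s := by
  simp [liabilityDecoder]

lemma liabilityDecoder_of_lt {A L s : ℕ} (hs : s < L) :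
    liabilityDecoder A L s = max 0 ((A : ℤ) - ((L : ℤ) - 1 - s)) := by
  simp [liabilityDecoder, Nat.not_le.mpr hs]

lemma erase_zero_subset_Icc {k : ℕ} {S : Finset ℕ} (hS : S ⊆ range (k + 1)) :
    S.erase 0 ⊆ Icc 1 k := by
  intro x hx
  obtain ⟨hx0, hxS⟩ := mem_erase.mp hx
  have := mem_range.mp (hS hxS)
  exact mem_Icc.mpr ⟨Nat.one_le_iff_ne_zero.mpr hx0, by omega⟩

lemma range_sdiff_erase_zero (k : ℕ) (S : Finset ℕ) :
    (range (k + 1) \ S).erase 0 = Icc 1 k \ S.erase 0 := by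
  ext x
  by_cases hx : x ∈ S <;> simp [hx] <;> omega

lemma sum_range_sdiff_erase_zero {M : Type*} [AddCommGroup M] (g : ℕ → M) {k : ℕ}
    {S : Finset ℕ} (hS : S ⊆ range (k + 1)) :
    ∑ j ∈ (range (k + 1) \ S).erase 0, g j = ∑ j ∈ Icc 1 k, g j - ∑ j ∈ S.erase 0, g j := by
  rw [range_sdiff_erase_zero, sum_sdiff_eq_sub (erase_zero_subset_Icc hS)]

lemma sum_erase_zero_congr {M : Type*} [AddCommMonoid M] {a l : ℕ → M}
    (ha : ∀ i, 1 ≤ i → a i = l i) (S : Finset ℕ) :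
    ∑ i ∈ S.erase 0, a i = ∑ i ∈ S.erase 0, l i :=
  sum_congr rfl fun i hi => ha i (Nat.one_le_iff_ne_zero.mpr (ne_of_mem_erase hi))

theorem liability_linearly_representable_general (k : ℕ) (l : ℕ → ℕ) (A : ℕ)
    (L : ℕ) (hL : L = (∑ i ∈ Finset.Icc 1 k, l i) + 1)
    (a : ℕ → ℕ) (ha0 : a 0 = L) (ha : ∀ i, 1 ≤ i → a i = l i)
    (f : ℕ → ℤ)
    (hf : ∀ x : ℕ, f x = if L ≤ x then min (A : ℤ) ((x : ℤ) - (L : ℤ))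
      else max 0 ((A : ℤ) - ((L : ℤ) - 1 - (x : ℤ))))
    (v : Finset ℕ → ℤ)
    (hv : ∀ S ⊆ Finset.range (k + 1),
      v S = if 0 ∈ S then min (A : ℤ) (∑ j ∈ S.erase 0, (l j : ℤ))
        else max 0 ((A : ℤ) - ∑ j ∈ (Finset.range (k + 1) \ S).erase 0, (l j : ℤ))) :
    ∀ S ⊆ Finset.range (k + 1), v S = f (∑ i ∈ S, a i) := by
  intro S hS
  obtain rfl : f = liabilityDecoder A L := funext hf
  rw [hv S hS]
  by_cases h0 : 0 ∈ S
  · rw [if_pos h0, ← add_sum_erase S a h0, ha0, sum_erase_zero_congr ha,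
      liabilityDecoder_add_left, Nat.cast_sum]
  · have hsum : ∑ i ∈ S, a i = ∑ i ∈ S.erase 0, l i := by
      rw [← sum_erase_zero_congr ha, erase_eq_of_notMem h0]
    have hlt : ∑ i ∈ S.erase 0, l i < L :=
      hL ▸ Nat.lt_succ_of_le (sum_le_sum_of_subset (erase_zero_subset_Icc hS))
    rw [if_neg h0, hsum, liabilityDecoder_of_lt hlt, sum_range_sdiff_erase_zero _ hS, hL]
    push_cast
    ring_nf

theorem liability_linearly_representable (k : ℕ) (l : ℕ → ℕ) (A : ℕ)
    (hA : A < ∑ i ∈ Finset.Icc 1 k, l i)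
    (L : ℕ) (hL : L = (∑ i ∈ Finset.Icc 1 k, l i) + 1)
    (a : ℕ → ℕ) (ha0 : a 0 = L) (ha : ∀ i, 1 ≤ i → a i = l i)
    (f : ℕ → ℤ)
    (hf : ∀ x : ℕ, f x = if L ≤ x then min (A : ℤ) ((x : ℤ) - (L : ℤ))
      else max 0 ((A : ℤ) - ((L : ℤ) - 1 - (x : ℤ))))
    (v : Finset ℕ → ℤ)
    (hv : ∀ S ⊆ Finset.range (k + 1),
      v S = if 0 ∈ S then min (A : ℤ) (∑ j ∈ S.erase 0, (l j : ℤ))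
        else max 0 ((A : ℤ) - ∑ j ∈ (Finset.range (k + 1) \ S).erase 0, (l j : ℤ))) :
    ∀ S ⊆ Finset.range (k + 1), v S = f (∑ i ∈ S, a i) :=
  liability_linearly_representable_general k l A L hL a ha0 ha f hf v hv
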